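/- arXiv:1606.06161 — 3 statements merged into one kernel-verified Lean document; each statement's English description precedes it below -/
import Mathlib

section
/- Let H be a complex Hilbert space, λ ∈ (0,1), A ∈ B(H), and P = x⊗x a rank-one orthogonal projection on H (i.e., ‖x‖ = 1). Then Δ_λ(A∘P) = P if and only if PA = P. -/
open scoped NNReal InnerProductSpace ComplexConjugate

noncomputable section

variable {H : Type*} [NormedAddCommGroup H] [InnerProductSpace ℂ H] [CompleteSpace H]

/-- The modulus `|T| = (T*T)^{1/2}` of a bounded operator. -/
def opAbs (T : H →L[ℂ] H) : H →L[ℂ] H := CFC.sqrt (star T * T)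

/-- `V` is the partial isometry appearing in the polar decomposition `T = V|T|`,
i.e. `V V* V = V`, `ker V = ker T` and `T = V|T|`. -/
def IsPolarPartialIsom (T V : H →L[ℂ] H) : Prop :=
  V * star V * V = V ∧ LinearMap.ker (V : H →ₗ[ℂ] H) = LinearMap.ker (T : H →ₗ[ℂ] H) ∧ T = V * opAbs T

open Classical in
/-- The partial isometry of the polar decomposition of `T` (it exists and is unique). -/
def polarIsom (T : H →L[ℂ] H) : H →L[ℂ] H :=
  if h : ∃ V, IsPolarPartialIsom T V then h.choose else 0

/-- The `λ`-Aluthge transform `Δ_λ(T) = |T|^λ V |T|^(1-λ)`. -/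
def aluthge (l : ℝ) (T : H →L[ℂ] H) : H →L[ℂ] H :=
  CFC.rpow (opAbs T) l * polarIsom T * CFC.rpow (opAbs T) (1 - l)

/-- The Jordan product `A ∘ B = (AB + BA)/2`. -/
def jordan (A B : H →L[ℂ] H) : H →L[ℂ] H := (2⁻¹ : ℂ) • (A * B + B * A)

/-- The rank-one operator `x ⊗ y : u ↦ ⟨u, y⟩ x` (the inner product being linear
in its first slot, as in the paper). -/
def rankOne (x y : H) : H →L[ℂ] H := (innerSL ℂ y).smulRight x

/-- A quasi-normal operator: `T` commutes with `T*T`. -/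
def IsQuasinormal (T : H →L[ℂ] H) : Prop := T * (star T * T) = (star T * T) * T

end
section Aux

open scoped NNReal InnerProductSpace ComplexConjugate

variable {H : Type*} [NormedAddCommGroup H] [InnerProductSpace ℂ H] [CompleteSpace H]

omit [CompleteSpace H] in
lemma rankOne_apply' (a b z : H) : rankOne a b z = (inner ℂ b z : ℂ) • a := rfl

omit [CompleteSpace H] in
lemma rankOne_mul_rankOne (a b c d : H) :
    rankOne a b * rankOne c d = (inner ℂ b c : ℂ) • rankOne a d := by
  ext z
  show rankOne a b (rankOne c d z) = (inner ℂ b c : ℂ) • rankOne a d z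
  rw [rankOne_apply', rankOne_apply', rankOne_apply', inner_smul_right, smul_smul]
  congr 1
  ring

omit [CompleteSpace H] in
lemma rankOne_smul_left (c : ℂ) (a b : H) : rankOne (c • a) b = c • rankOne a b := by
  ext z
  show (inner ℂ b z : ℂ) • (c • a) = c • ((inner ℂ b z : ℂ) • a)
  exact smul_comm _ _ _

lemma star_rankOne (a b : H) : star (rankOne a b) = rankOne b a := by
  rw [ContinuousLinearMap.star_eq_adjoint]
  refine (((ContinuousLinearMap.eq_adjoint_iff (rankOne b a) (rankOne a b)).mpr ?_)).symm
  intro u v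
  simp only [rankOne_apply', inner_smul_left, inner_smul_right]
  rw [← inner_conj_symm u a, ← inner_conj_symm b v]
  ring

lemma sa_inner_move (a : H →L[ℂ] H) (ha : IsSelfAdjoint a) (u v : H) :
    (inner ℂ (a u) v : ℂ) = inner ℂ u (a v) := by
  nth_rewrite 1 [← ha.adjoint_eq]
  exact ContinuousLinearMap.adjoint_inner_left a v u

lemma rpow_mul_rpow' (a : H →L[ℂ] H) (ha : 0 ≤ a) {s t : ℝ} (hs : 0 < s) (ht : 0 < t) :
    CFC.rpow a s * CFC.rpow a t = CFC.rpow a (s + t) := by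
  show cfc (fun u : ℝ≥0 => u ^ s) a * cfc (fun u : ℝ≥0 => u ^ t) a
      = cfc (fun u : ℝ≥0 => u ^ (s + t)) a
  rw [← cfc_mul _ _ a ((NNReal.continuous_rpow_const hs.le).continuousOn)
      ((NNReal.continuous_rpow_const ht.le).continuousOn)]
  exact cfc_congr fun u _ => (NNReal.rpow_add' (x := u) (by positivity)).symm

lemma rpow_apply_eq_zero (a : H →L[ℂ] H) (ha : 0 ≤ a) {z : H} (hz : a z = 0)
    {t : ℝ} (ht : 0 < t) : CFC.rpow a t z = 0 := by
  have hsa : IsSelfAdjoint a := ha.isSelfAdjoint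
  have key : ∀ n : ℕ, ∀ s : ℝ, ((2:ℝ)⁻¹) ^ n ≤ s → CFC.rpow a s z = 0 := by
    intro n
    induction n with
    | zero =>
      intro s hs
      simp only [pow_zero] at hs
      rcases eq_or_lt_of_le hs with h | h
      · have hone : CFC.rpow a 1 = a := CFC.rpow_one a ha
        rw [← h, hone]
        exact hz
      · have hsize : (0:ℝ) < s - 1 := by linarith
        have hone : CFC.rpow a 1 = a := CFC.rpow_one a ha
        have hmul : CFC.rpow a (s - 1) * CFC.rpow a 1 = CFC.rpow a s := by
          rw [rpow_mul_rpow' a ha hsize one_pos]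
          norm_num
        have := congrArg (fun f => f z) hmul
        simp only [ContinuousLinearMap.mul_apply] at this
        rw [hone, hz, map_zero] at this
        exact this.symm
    | succ n ih =>
      intro s hs
      have hspos : (0:ℝ) < s := lt_of_lt_of_le (by positivity) hs
      have h2s : CFC.rpow a (s + s) z = 0 := by
        refine ih (s + s) ?_
        have : ((2:ℝ)⁻¹) ^ n = 2 * ((2:ℝ)⁻¹) ^ (n+1) := by ring
        rw [this]
        linarith
      have hinner : (inner ℂ (CFC.rpow a s z) (CFC.rpow a s z) : ℂ) = 0 := by
        have hsa' : IsSelfAdjoint (CFC.rpow a s) :=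
          (CFC.rpow_nonneg (a := a) (y := s)).isSelfAdjoint
        rw [sa_inner_move _ hsa' z (CFC.rpow a s z)]
        have : CFC.rpow a s (CFC.rpow a s z) = CFC.rpow a (s + s) z := by
          have := congrArg (fun f => f z) (rpow_mul_rpow' a ha hspos hspos)
          simpa only [ContinuousLinearMap.mul_apply] using this
        rw [this, h2s, inner_zero_right]
      exact inner_self_eq_zero.mp hinner
  obtain ⟨n, hn⟩ := exists_pow_lt_of_lt_one ht (by norm_num : (2:ℝ)⁻¹ < 1)
  exact key n t hn.le

lemma spec_quad (a : H →L[ℂ] H) (r : ℝ≥0) (hq : a * a = ((r:ℝ):ℂ) • a) :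
    spectrum ℝ≥0 a ⊆ {0, r} := by
  intro μ hμ
  by_contra hns
  simp only [Set.mem_insert_iff, Set.mem_singleton_iff, not_or] at hns
  obtain ⟨h0, hr⟩ := hns
  set ν : ℂ := ((μ:ℝ):ℂ) with hν
  set ρ : ℂ := ((r:ℝ):ℂ) with hρ
  have hν0 : ν ≠ 0 := by
    simp only [hν, ne_eq, Complex.ofReal_eq_zero, NNReal.coe_eq_zero]
    exact h0
  have hνρ : ν - ρ ≠ 0 := by
    simp only [hν, hρ, ne_eq, sub_eq_zero]
    exact_mod_cast hr
  have key : algebraMap ℝ≥0 (H →L[ℂ] H) μ = ν • 1 := by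
    rw [Algebra.algebraMap_eq_smul_one, NNReal.smul_def, hν]
    rw [← Complex.coe_algebraMap, algebraMap_smul]
  set c : ℂ := ν * (ν - ρ) with hc
  have hc0 : c ≠ 0 := mul_ne_zero hν0 hνρ
  set u : H →L[ℂ] H := c⁻¹ • ((ν - ρ) • 1 + a) with hu
  have h1 : (ν • 1 - a) * u = 1 := by
    rw [hu, mul_smul_comm]
    rw [mul_add, sub_mul, sub_mul]
    simp only [smul_mul_assoc, mul_smul_comm, one_mul, mul_one, hq]
    rw [smul_smul]
    match_scalars
    all_goals field_simp [hc]
    all_goals ring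
  have h2 : u * (ν • 1 - a) = 1 := by
    rw [hu, smul_mul_assoc]
    rw [add_mul, mul_sub, mul_sub]
    simp only [smul_mul_assoc, mul_smul_comm, one_mul, mul_one, hq]
    rw [smul_smul]
    match_scalars
    all_goals field_simp [hc]
    all_goals ring
  have : IsUnit (algebraMap ℝ≥0 (H →L[ℂ] H) μ - a) := by
    rw [key]
    exact isUnit_iff_exists.mpr ⟨u, h1, h2⟩
  exact (spectrum.notMem_iff.mpr this) hμ

lemma rpow_of_quad (a : H →L[ℂ] H) (ha : 0 ≤ a) (r : ℝ≥0) (hr : r ≠ 0)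
    (hspec : spectrum ℝ≥0 a ⊆ {0, r}) {t : ℝ} (ht : 0 < t) :
    CFC.rpow a t = (r ^ (t - 1) : ℝ≥0) • a := by
  have h1 : CFC.rpow a t = cfc (fun u : ℝ≥0 => u ^ t) a := rfl
  have h2 : cfc (fun u : ℝ≥0 => u ^ t) a = cfc (fun u : ℝ≥0 => (r ^ (t-1) : ℝ≥0) * u) a := by
    apply cfc_congr
    intro u hu
    rcases hspec hu with h | h
    · simp only [Set.mem_singleton_iff] at h ⊢
      subst h
      simp [NNReal.zero_rpow ht.ne']
    · simp only [Set.mem_singleton_iff] at h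
      subst h
      show u ^ t = u ^ (t-1) * u
      conv_lhs => rw [show t = (t-1) + 1 by ring]
      rw [NNReal.rpow_add (by exact_mod_cast hr), NNReal.rpow_one]
  rw [h1, h2, cfc_const_mul_id _ a ha]

end Aux
variable {H K : Type*} [NormedAddCommGroup H] [InnerProductSpace ℂ H] [CompleteSpace H]
  [NormedAddCommGroup K] [InnerProductSpace ℂ K] [CompleteSpace K]

set_option maxHeartbeats 2000000 in
set_option synthInstance.maxHeartbeats 1000000 in
theorem aluthge_jordan_rankOneProj_eq_proj_iff (l : ℝ) (hl : l ∈ Set.Ioo (0 : ℝ) 1)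
    (A : H →L[ℂ] H) (x : H) (hx : ‖x‖ = 1) :
    aluthge l (jordan A (rankOne x x)) = rankOne x x ↔ rankOne x x * A = rankOne x x := by
  obtain ⟨hl0, hl1⟩ := hl
  have hl1' : (0:ℝ) < 1 - l := by linarith
  have hxx : (inner ℂ x x : ℂ) = 1 := by
    rw [inner_self_eq_norm_sq_to_K, hx]
    norm_num
  have hx0 : x ≠ 0 := by
    intro h
    rw [h, norm_zero] at hx
    norm_num at hx
  have hPx : rankOne x x x = x := by rw [rankOne_apply', hxx, one_smul]
  have hPsa : star (rankOne x x) = rankOne x x := star_rankOne x x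
  have hPP : rankOne x x * rankOne x x = rankOne x x := by
    rw [rankOne_mul_rankOne, hxx, one_smul]
  set P : H →L[ℂ] H := rankOne x x with hPdef
  set T : H →L[ℂ] H := jordan A P with hTdef
  set S : H →L[ℂ] H := opAbs T with hSdef
  have hTT : (0:H →L[ℂ] H) ≤ star T * T := star_mul_self_nonneg T
  have hSnn : (0:H →L[ℂ] H) ≤ S := by
    rw [hSdef]
    exact CFC.sqrt_nonneg _
  have hSsa : IsSelfAdjoint S := hSnn.isSelfAdjoint
  have hS2 : S * S = star T * T := by
    rw [hSdef]
    exact CFC.sqrt_mul_sqrt_self _ hTT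
  set w : H := ContinuousLinearMap.adjoint A x with hwdef
  have hTap : ∀ z, T z = (2⁻¹:ℂ) • ((inner ℂ x z : ℂ) • A x + (inner ℂ w z : ℂ) • x) := by
    intro z
    have : T z = (2⁻¹:ℂ) • ((A * P) z + (P * A) z) := by
      rw [hTdef]
      rfl
    rw [this]
    congr 2
    · show A (P z) = (inner ℂ x z : ℂ) • A x
      rw [hPdef, rankOne_apply', map_smul]
    · show (inner ℂ x (A z) : ℂ) • x = (inner ℂ w z : ℂ) • x
      rw [hwdef, ContinuousLinearMap.adjoint_inner_left]
  constructor
  · -- forward direction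
    intro hD
    set C : H →L[ℂ] H := CFC.rpow S l with hCdef
    set B : H →L[ℂ] H := CFC.rpow S (1 - l) with hBdef
    have hCnn : (0:H →L[ℂ] H) ≤ C := by
      rw [hCdef]
      exact CFC.rpow_nonneg
    have hCsa : IsSelfAdjoint C := hCnn.isSelfAdjoint
    have hBC : B * C = S := by
      rw [hBdef, hCdef, rpow_mul_rpow' S hSnn hl1' hl0]
      rw [show (1 - l) + l = 1 by ring]
      exact CFC.rpow_one S hSnn
    by_cases hex : ∃ V, IsPolarPartialIsom T V
    swap
    · exfalso
      have h0 : aluthge l T = 0 := by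
        unfold aluthge polarIsom
        rw [dif_neg hex, mul_zero, zero_mul]
      rw [h0] at hD
      have := congrArg (fun f => f x) hD
      simp only [ContinuousLinearMap.zero_apply] at this
      exact hx0 (by rw [← hPx, ← this])
    · have hpi : polarIsom T = hex.choose := by rw [polarIsom, dif_pos hex]
      set V : H →L[ℂ] H := hex.choose with hVdef
      have hV : IsPolarPartialIsom T V := hex.choose_spec
      have hVS : T = V * S := hV.2.2
      have halu : aluthge l T = C * V * B := by rw [aluthge, hpi]
      have K2 : P * C = C * T := by
        have h1 : (C * V * B) * C = C * T := by
          rw [mul_assoc, mul_assoc, hBC, ← mul_assoc, mul_assoc, ← hVS]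
        rw [← h1, ← halu, hD]
      have K1 : C * P = star T * C := by
        have := congrArg star K2
        rw [star_mul, star_mul, hCsa.star_eq, hPsa] at this
        exact this
      set y : H := C x with hydef
      have hy0 : y ≠ 0 := by
        intro h
        have hax : x = C (V (B x)) := by
          have h1 : aluthge l T = C * (V * B) := by rw [halu, mul_assoc]
          have h2 := congrArg (fun f => f x) h1
          simp only [ContinuousLinearMap.mul_apply] at h2
          rw [hD] at h2
          calc x = P x := hPx.symm
            _ = C (V (B x)) := h2
        have : (inner ℂ x x : ℂ) = 0 := by
          nth_rewrite 1 [hax]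
          rw [sa_inner_move C hCsa, ← hydef, h, inner_zero_right]
        rw [hxx] at this
        exact one_ne_zero this
      have hCz : ∀ z, (inner ℂ x z : ℂ) = 0 → (inner ℂ w z : ℂ) = 0 → C z = 0 := by
        intro z h1 h2
        have hTz : T z = 0 := by
          rw [hTap z, h1, h2, zero_smul, zero_smul, add_zero, smul_zero]
        have hSz : S z = 0 := by
          have hinner : (inner ℂ (S z) (S z) : ℂ) = 0 := by
            rw [sa_inner_move S hSsa z (S z)]
            have hsz : S (S z) = (star T * T) z := by
              rw [← hS2]; rfl
            rw [hsz]
            have : (star T * T) z = ContinuousLinearMap.adjoint T (T z) := by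
              rw [ContinuousLinearMap.star_eq_adjoint]; rfl
            rw [this, hTz, map_zero, inner_zero_right]
          exact inner_self_eq_zero.mp hinner
        exact rpow_apply_eq_zero S hSnn hSz hl0
      obtain ⟨c, hc⟩ : ∃ c : ℂ, y = c • x := by
        set w' : H := w - (inner ℂ x w : ℂ) • x with hw'def
        have hxw' : (inner ℂ x w' : ℂ) = 0 := by
          rw [hw'def, inner_sub_right, inner_smul_right, hxx, mul_one, sub_self]
        by_cases hw'0 : w' = 0
        · refine ⟨(inner ℂ x y : ℂ), ?_⟩
          set z₀ : H := y - (inner ℂ x y : ℂ) • x with hz₀def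
          have hxz : (inner ℂ x z₀ : ℂ) = 0 := by
            rw [hz₀def, inner_sub_right, inner_smul_right, hxx, mul_one, sub_self]
          have hwz : (inner ℂ w z₀ : ℂ) = 0 := by
            have hw : w = (inner ℂ x w : ℂ) • x := by
              rw [hw'def] at hw'0
              exact sub_eq_zero.mp hw'0
            rw [hw, inner_smul_left, hxz, mul_zero]
          have hyz : (inner ℂ y z₀ : ℂ) = 0 := by
            rw [hydef, sa_inner_move C hCsa x z₀, hCz z₀ hxz hwz, inner_zero_right]
          have hzz : (inner ℂ z₀ z₀ : ℂ) = 0 := by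
            nth_rewrite 1 [hz₀def]
            rw [inner_sub_left, inner_smul_left, hxz, hyz, mul_zero, sub_self]
          have hz0 := inner_self_eq_zero.mp hzz
          rw [hz₀def] at hz0
          exact sub_eq_zero.mp hz0
        · have hww' : (inner ℂ w w' : ℂ) = inner ℂ w' w' := by
            have hw : w = w' + (inner ℂ x w : ℂ) • x := by rw [hw'def]; abel
            nth_rewrite 1 [hw]
            rw [inner_add_left, inner_smul_left, hxw', mul_zero, add_zero]
          have hTw' : T w' = ((2⁻¹:ℂ) * (inner ℂ w' w' : ℂ)) • x := by
            rw [hTap w', hxw', hww', zero_smul, zero_add, smul_smul]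
          have happ := congrArg (fun f => f w') K2
          simp only [ContinuousLinearMap.mul_apply] at happ
          have hPCw : P (C w') = (inner ℂ y w' : ℂ) • x := by
            rw [hPdef, rankOne_apply']
            congr 1
            rw [hydef]
            exact (sa_inner_move C hCsa x w').symm
          have hCTw : C (T w') = ((2⁻¹:ℂ) * (inner ℂ w' w' : ℂ)) • y := by
            rw [hTw', map_smul, hydef]
          rw [hPCw, hCTw] at happ
          have hww0 : ((2⁻¹:ℂ) * (inner ℂ w' w' : ℂ)) ≠ 0 := by
            apply mul_ne_zero (by norm_num)
            rw [ne_eq, inner_self_eq_zero]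
            exact hw'0
          refine ⟨((2⁻¹:ℂ) * (inner ℂ w' w' : ℂ))⁻¹ * (inner ℂ y w' : ℂ), ?_⟩
          rw [mul_smul, happ, inv_smul_smul₀ hww0]
      have hc0 : c ≠ 0 := by
        intro h
        exact hy0 (by rw [hc, h, zero_smul])
      have hTy : star T y = y := by
        have happ := congrArg (fun f => f x) K1
        simp only [ContinuousLinearMap.mul_apply] at happ
        rw [hPx] at happ
        rw [hydef]
        exact happ.symm
      have hTx : star T x = x := by
        have h1 : star T (c • x) = c • x := by rw [← hc]; exact hTy
        rw [map_smul] at h1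
        exact smul_right_injective H hc0 h1
      have hstarT : ∀ z, star T z
          = (2⁻¹:ℂ) • ((inner ℂ x z : ℂ) • w + (inner ℂ (A x) z : ℂ) • x) := by
        intro z
        have hsT : star T = (2⁻¹:ℂ) • (ContinuousLinearMap.adjoint A * P
            + P * ContinuousLinearMap.adjoint A) := by
          rw [hTdef]
          show star ((2⁻¹:ℂ) • (A * P + P * A)) = _
          rw [star_smul, star_add, star_mul, star_mul, hPsa,
            ContinuousLinearMap.star_eq_adjoint]
          congr 1
          · simp
          · rw [add_comm]
        rw [hsT]
        have h1 : (ContinuousLinearMap.adjoint A * P) z = (inner ℂ x z : ℂ) • w := by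
          show ContinuousLinearMap.adjoint A (P z) = _
          rw [hPdef, rankOne_apply', map_smul, hwdef]
        have h2 : (P * ContinuousLinearMap.adjoint A) z = (inner ℂ (A x) z : ℂ) • x := by
          show P (ContinuousLinearMap.adjoint A z) = _
          rw [hPdef, rankOne_apply']
          congr 1
          rw [ContinuousLinearMap.adjoint_inner_right]
        show (2⁻¹:ℂ) • ((ContinuousLinearMap.adjoint A * P) z
            + (P * ContinuousLinearMap.adjoint A) z) = _
        rw [h1, h2]
      have hxAx : (inner ℂ (A x) x : ℂ) = inner ℂ x w := by
        rw [hwdef, ContinuousLinearMap.adjoint_inner_right]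
      have hxw1 : (inner ℂ x w : ℂ) = 1 := by
        have h1 : star T x = (2⁻¹:ℂ) • ((inner ℂ x x : ℂ) • w + (inner ℂ (A x) x : ℂ) • x) :=
          hstarT x
        rw [hTx, hxx, one_smul, hxAx] at h1
        have h2 : (inner ℂ x x : ℂ)
            = (2⁻¹:ℂ) * ((inner ℂ x w : ℂ) + (inner ℂ x w : ℂ) * (inner ℂ x x : ℂ)) := by
          nth_rewrite 2 [h1]
          rw [inner_smul_right, inner_add_right, inner_smul_right]
        rw [hxx, mul_one] at h2
        linear_combination -h2
      have hwx : w = x := by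
        have h1 : star T x = (2⁻¹:ℂ) • ((inner ℂ x x : ℂ) • w + (inner ℂ (A x) x : ℂ) • x) :=
          hstarT x
        rw [hTx, hxx, one_smul, hxAx, hxw1, one_smul] at h1
        have h3 : (2:ℂ) • x = w + x := by
          nth_rewrite 1 [h1]
          rw [smul_smul]
          norm_num
        have h4 : w = (2:ℂ) • x - x := eq_sub_of_add_eq h3.symm
        rw [h4, two_smul, add_sub_cancel_right]
      ext z
      show P (A z) = P z
      rw [hPdef, rankOne_apply', rankOne_apply']
      congr 1
      rw [show (inner ℂ x (A z) : ℂ) = inner ℂ w z from ?_, hwx]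
      rw [hwdef, ContinuousLinearMap.adjoint_inner_left]
  · -- reverse direction
    intro hPA
    have hwx : w = x := by
      have h1 : ContinuousLinearMap.adjoint A * P = P := by
        have := congrArg star hPA
        rw [star_mul, hPsa, ContinuousLinearMap.star_eq_adjoint] at this
        exact this
      have h2 := congrArg (fun f => f x) h1
      simp only [ContinuousLinearMap.mul_apply] at h2
      rw [hPx] at h2
      rw [hwdef]
      exact h2
    set y₀ : H := (2⁻¹:ℂ) • (A x + x) with hy₀def
    have hT : T = rankOne y₀ x := by
      ext z
      rw [hTap z, hwx, rankOne_apply', hy₀def]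
      module
    have hAxx : (inner ℂ (A x) x : ℂ) = 1 := by
      rw [← ContinuousLinearMap.adjoint_inner_right, ← hwdef, hwx, hxx]
    have hy₀x : (inner ℂ y₀ x : ℂ) = 1 := by
      rw [hy₀def, inner_smul_left, inner_add_left, hAxx, hxx, map_inv₀, map_ofNat]
      norm_num
    have hxy₀ : (inner ℂ x y₀ : ℂ) = 1 := by
      rw [← inner_conj_symm, hy₀x, map_one]
    have hy₀0 : y₀ ≠ 0 := by
      intro h
      rw [h, inner_zero_left] at hy₀x
      exact zero_ne_one hy₀x
    set r : ℝ := ‖y₀‖ with hrdef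
    have hr1 : (1:ℝ) ≤ r := by
      have := norm_inner_le_norm (𝕜 := ℂ) y₀ x
      rw [hy₀x, hx, mul_one] at this
      simpa using this
    have hr0 : (0:ℝ) < r := lt_of_lt_of_le one_pos hr1
    have hrC : ((r:ℂ)) ≠ 0 := by
      simp only [ne_eq, Complex.ofReal_eq_zero]
      exact hr0.ne'
    have hy₀y₀ : (inner ℂ y₀ y₀ : ℂ) = ((r:ℂ))^2 := by
      rw [inner_self_eq_norm_sq_to_K, hrdef]
      norm_num
    have hTT' : star T * T = (((r:ℂ))^2) • P := by
      rw [hT, star_rankOne, rankOne_mul_rankOne, hy₀y₀, hPdef]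
    have hSP : S = (r:ℂ) • P := by
      have hb : ((r:ℂ)) • P = star ((((Real.sqrt r : ℝ)):ℂ) • P) * ((((Real.sqrt r : ℝ)):ℂ) • P) := by
        rw [star_smul, hPsa, smul_mul_smul_comm, hPP]
        congr 1
        rw [Complex.star_def, Complex.conj_ofReal, ← Complex.ofReal_mul,
          Real.mul_self_sqrt hr0.le]
      have hbnn : (0:H →L[ℂ] H) ≤ (r:ℂ) • P := hb ▸ star_mul_self_nonneg _
      have hsq : ((r:ℂ) • P) * ((r:ℂ) • P) = star T * T := by
        rw [smul_mul_smul_comm, hPP, hTT', sq]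
      exact CFC.sqrt_unique hsq hbnn
    have hSnn' : (0:H →L[ℂ] H) ≤ S := hSnn
    set ρ : ℝ≥0 := r.toNNReal with hρdef
    have hρr : ((ρ:ℝ)) = r := Real.coe_toNNReal r hr0.le
    have hρ0 : ρ ≠ 0 := by
      rw [ne_eq, ← NNReal.coe_eq_zero, hρr]
      exact hr0.ne'
    have hq : S * S = ((ρ:ℝ):ℂ) • S := by
      rw [hSP, smul_mul_smul_comm, hPP, hρr, smul_smul]
    have hspec := spec_quad S ρ hq
    have hnsmul : ∀ (c : ℝ≥0) (X : H →L[ℂ] H), c • X = ((c:ℝ):ℂ) • X := by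
      intro c X
      rw [NNReal.smul_def, ← algebraMap_smul ℂ ((c:ℝ)) X, Complex.coe_algebraMap]
    have hrp : ∀ t : ℝ, 0 < t → CFC.rpow S t = (((r ^ t : ℝ)):ℂ) • P := by
      intro t ht
      rw [rpow_of_quad S hSnn ρ hρ0 hspec ht, hnsmul, hSP, smul_smul]
      congr 1
      rw [NNReal.coe_rpow, hρr, ← Complex.ofReal_mul]
      congr 1
      rw [← Real.rpow_add_one hr0.ne' (t-1)]
      norm_num
    -- the polar partial isometry
    set u : H := (r:ℂ)⁻¹ • y₀ with hudef
    set V₀ : H →L[ℂ] H := rankOne u x with hV₀def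
    have huu : (inner ℂ u u : ℂ) = 1 := by
      rw [hudef, inner_smul_left, inner_smul_right, hy₀y₀, map_inv₀, Complex.conj_ofReal]
      field_simp
    have hTV₀ : T = V₀ * opAbs T := by
      have : (opAbs T : H →L[ℂ] H) = (r:ℂ) • P := hSP
      rw [this, hV₀def, mul_smul_comm, rankOne_mul_rankOne, hxx, one_smul, hudef,
        rankOne_smul_left, smul_smul, mul_inv_cancel₀ hrC, one_smul, hT]
    have hkerT : ∀ z : H, T z = 0 ↔ (inner ℂ x z : ℂ) = 0 := by
      intro z
      rw [hT, rankOne_apply', smul_eq_zero]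
      constructor
      · rintro (h | h)
        · exact h
        · exact absurd h hy₀0
      · exact Or.inl
    have hu0 : u ≠ 0 := by
      rw [hudef, ne_eq, smul_eq_zero, not_or]
      exact ⟨inv_ne_zero hrC, hy₀0⟩
    have hpp : IsPolarPartialIsom T V₀ := by
      refine ⟨?_, ?_, hTV₀⟩
      · rw [hV₀def, star_rankOne, rankOne_mul_rankOne, hxx, one_smul, rankOne_mul_rankOne,
          huu, one_smul]
      · apply Submodule.ext
        intro z
        rw [LinearMap.mem_ker, LinearMap.mem_ker]
        show V₀ z = 0 ↔ T z = 0
        rw [hkerT z, hV₀def, rankOne_apply', smul_eq_zero]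
        constructor
        · rintro (h | h)
          · exact h
          · exact absurd h hu0
        · exact Or.inl
    have hex : ∃ V, IsPolarPartialIsom T V := ⟨V₀, hpp⟩
    have huniq : ∀ V' : H →L[ℂ] H, IsPolarPartialIsom T V' → V' = V₀ := by
      rintro V' ⟨-, h2, h3⟩
      have hV'x : V' x = u := by
        have h4 := congrArg (fun f => f x) h3
        simp only [ContinuousLinearMap.mul_apply] at h4
        rw [show (opAbs T : H →L[ℂ] H) = (r:ℂ) • P from hSP] at h4
        simp only [ContinuousLinearMap.smul_apply] at h4
        rw [hPx, map_smul] at h4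
        have h5 : T x = y₀ := by rw [hT, rankOne_apply', hxx, one_smul]
        rw [h5] at h4
        rw [hudef, h4, smul_smul, inv_mul_cancel₀ hrC, one_smul]
      ext z
      have hz' : V' (z - (inner ℂ x z : ℂ) • x) = 0 := by
        have hmem : (z - (inner ℂ x z : ℂ) • x) ∈ LinearMap.ker (V' : H →ₗ[ℂ] H) := by
          rw [h2, LinearMap.mem_ker]
          rw [ContinuousLinearMap.coe_coe, hkerT]
          rw [inner_sub_right, inner_smul_right, hxx, mul_one, sub_self]
        rw [LinearMap.mem_ker] at hmem
        exact hmem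
      have hzdec : z = (inner ℂ x z : ℂ) • x + (z - (inner ℂ x z : ℂ) • x) := by abel
      have e1 : V' z = (inner ℂ x z : ℂ) • u := by
        nth_rewrite 1 [hzdec]
        rw [map_add, map_smul, hV'x, hz', add_zero]
      have e2 : V₀ z = (inner ℂ x z : ℂ) • u := by
        rw [hV₀def, rankOne_apply']
      rw [e1, e2]
    have hpi : polarIsom T = V₀ := by
      unfold polarIsom
      rw [dif_pos hex]
      exact huniq _ hex.choose_spec
    have hfin : (((r ^ l : ℝ):ℂ) • P) * V₀ * (((r ^ (1-l) : ℝ):ℂ) • P) = P := by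
      have hxu : (inner ℂ x u : ℂ) = ((r:ℂ))⁻¹ := by
        rw [hudef, inner_smul_right, hxy₀, mul_one]
      have hPV : P * V₀ = ((r:ℂ))⁻¹ • P := by
        rw [hPdef, hV₀def, rankOne_mul_rankOne, hxu]
      calc (((r ^ l : ℝ):ℂ) • P) * V₀ * (((r ^ (1-l) : ℝ):ℂ) • P)
          = (((r ^ l : ℝ):ℂ) * ((r ^ (1-l) : ℝ):ℂ)) • (P * V₀ * P) := by
            rw [smul_mul_assoc, smul_mul_assoc, mul_smul_comm, smul_smul]
        _ = (((r ^ l : ℝ):ℂ) * ((r ^ (1-l) : ℝ):ℂ)) • (((r:ℂ))⁻¹ • P) := by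
            rw [hPV, smul_mul_assoc, hPP]
        _ = ((((r ^ l : ℝ):ℂ) * ((r ^ (1-l) : ℝ):ℂ)) * ((r:ℂ))⁻¹) • P := by
            rw [smul_smul]
        _ = P := by
            have : (((r ^ l : ℝ):ℂ) * ((r ^ (1-l) : ℝ):ℂ)) * ((r:ℂ))⁻¹ = 1 := by
              rw [← Complex.ofReal_mul, ← Real.rpow_add hr0]
              rw [show l + (1 - l) = 1 by ring, Real.rpow_one]
              exact mul_inv_cancel₀ hrC
            rw [this, one_smul]
    show aluthge l T = P
    unfold aluthge
    rw [hpi, ← hSdef, hrp l hl0, hrp (1-l) hl1']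
    exact hfin
end

section
/- Let H be a complex Hilbert space, λ ∈ (0,1), and S ∈ B(H) such that both S and S* are injective. If Δ_λ(S) = S*, then S = S*. -/
open scoped NNReal InnerProductSpace ComplexConjugate

variable {H K : Type*} [NormedAddCommGroup H] [InnerProductSpace ℂ H] [CompleteSpace H]
  [NormedAddCommGroup K] [InnerProductSpace ℂ K] [CompleteSpace K]

set_option maxHeartbeats 1000000
set_option synthInstance.maxHeartbeats 400000

section AuxLemmas

/-- If `b` commutes with a selfadjoint `a`, then `b` commutes with `cfc f a` (real functional
calculus), by Stone–Weierstrass density of polynomials. -/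
lemma aux_commute_cfc_real (a b : H →L[ℂ] H) (ha : IsSelfAdjoint a) (hab : b * a = a * b)
    (f : ℝ → ℝ) : b * cfc f a = cfc f a * b := by
  by_cases hf : ContinuousOn f (spectrum ℝ a)
  · suffices h' : ∀ g : C(spectrum ℝ a, ℝ), b * cfcHom ha g = cfcHom ha g * b by
      rw [cfc_apply f a ha hf]; exact h' _
    intro g
    induction g using ContinuousMap.induction_on_of_compact with
    | const r =>
      have : ContinuousMap.const (spectrum ℝ a) r = algebraMap ℝ C(spectrum ℝ a, ℝ) r := rfl
      rw [this, AlgHomClass.commutes]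
      exact (Algebra.commutes r b).symm
    | id => rw [cfcHom_id ha]; exact hab
    | star_id =>
      have : star ((ContinuousMap.id ℝ).restrict (spectrum ℝ a))
          = (ContinuousMap.id ℝ).restrict (spectrum ℝ a) := by ext x; exact star_trivial _
      rw [this, cfcHom_id ha]; exact hab
    | add f g hf hg => rw [map_add, mul_add, add_mul, hf, hg]
    | mul f g hf hg => rw [map_mul, ← mul_assoc, hf, mul_assoc, hg, mul_assoc]
    | frequently g hfreq =>
      have hcl : IsClosed {g : C(spectrum ℝ a, ℝ) | b * cfcHom ha g = cfcHom ha g * b} :=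
        isClosed_eq ((continuous_mul_left b).comp (cfcHom_continuous ha))
          ((continuous_mul_right b).comp (cfcHom_continuous ha))
      exact hcl.closure_subset (mem_closure_iff_frequently.mpr hfreq)
  · rw [cfc_apply_of_not_continuousOn a hf]; simp

/-- If `b` commutes with `0 ≤ a` then `b` commutes with any real power of `a`. -/
lemma aux_commute_rpow (a b : H →L[ℂ] H) (ha : (0 : H →L[ℂ] H) ≤ a) (hab : b * a = a * b)
    (y : ℝ) : b * CFC.rpow a y = CFC.rpow a y * b := by
  show b * cfc (fun z : ℝ≥0 => z ^ y) a = cfc (fun z : ℝ≥0 => z ^ y) a * b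
  rw [cfc_nnreal_eq_real (a := a) (fun z : ℝ≥0 => z ^ y) ha]
  exact aux_commute_cfc_real a b (.of_nonneg ha) hab _

/-- `a ^ (x + y) = a ^ x * a ^ y` for positive exponents, with no invertibility assumption. -/
lemma aux_rpow_add (a : H →L[ℂ] H) (ha : (0 : H →L[ℂ] H) ≤ a) {x y : ℝ}
    (hx : 0 < x) (hy : 0 < y) :
    CFC.rpow a (x + y) = CFC.rpow a x * CFC.rpow a y := by
  show cfc (fun z : ℝ≥0 => z ^ (x + y)) a
      = cfc (fun z : ℝ≥0 => z ^ x) a * cfc (fun z : ℝ≥0 => z ^ y) a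
  rw [← cfc_mul _ _ a (NNReal.continuous_rpow_const hx.le).continuousOn
    (NNReal.continuous_rpow_const hy.le).continuousOn]
  exact cfc_congr fun z _ => z.rpow_add' (by positivity)

lemma aux_injective_of (T : H →L[ℂ] H) (h : ∀ x, T x = 0 → x = 0) :
    Function.Injective T := fun x y hxy =>
  sub_eq_zero.mp (h _ (by rw [map_sub, hxy, sub_self]))

lemma aux_TstarT (T : H →L[ℂ] H) (x : H) (hx : (star T * T) x = 0) : T x = 0 := by
  have h0 : ⟪T x, T x⟫_ℂ = 0 := by
    calc ⟪T x, T x⟫_ℂ = ⟪ContinuousLinearMap.adjoint T (T x), x⟫_ℂ :=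
          (ContinuousLinearMap.adjoint_inner_left _ _ _).symm
      _ = ⟪(star T * T) x, x⟫_ℂ := by
          simp [ContinuousLinearMap.mul_apply, ContinuousLinearMap.star_eq_adjoint]
      _ = ⟪(0 : H), x⟫_ℂ := by rw [hx]
      _ = 0 := inner_zero_left x
  exact inner_self_eq_zero.mp h0

lemma aux_idem (P : H →L[ℂ] H) (h : P * P = P) (hinj : Function.Injective P) : P = 1 := by
  ext x
  have h1 : P (P x) = P x := by rw [← ContinuousLinearMap.mul_apply, h]
  simpa using hinj h1

lemma aux_cancel (P B C : H →L[ℂ] H) (hPinj : Function.Injective P) (h : P * B = P * C) :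
    B = C := by
  ext x
  have h2 : P (B x) = P (C x) := by
    have h3 := congr_arg (fun T : H →L[ℂ] H => T x) h
    simpa [ContinuousLinearMap.mul_apply] using h3
  exact hPinj h2

end AuxLemmas

theorem selfAdjoint_of_aluthge_eq_adjoint (l : ℝ) (hl : l ∈ Set.Ioo (0 : ℝ) 1)
    (S : H →L[ℂ] H) (hS : Function.Injective S)
    (hS' : Function.Injective (star S : H →L[ℂ] H))
    (h : aluthge l S = star S) : S = star S := by
  obtain ⟨hl0, hl1⟩ := hl
  have h1l : (0 : ℝ) < 1 - l := by linarith
  by_cases hex : ∃ V, IsPolarPartialIsom S V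
  · -- main case
    have hVspec : IsPolarPartialIsom S (polarIsom S) := by
      unfold polarIsom
      rw [dif_pos hex]
      exact hex.choose_spec
    unfold aluthge at h
    set A := opAbs S with hAdef
    set V := polarIsom S with hVdef
    obtain ⟨hV1, hVker, hSVA⟩ := hVspec
    rw [← hAdef] at hSVA
    set W := star V with hWdef
    -- facts about A
    have hSS : (0 : H →L[ℂ] H) ≤ star S * S := star_mul_self_nonneg S
    have hA0 : (0 : H →L[ℂ] H) ≤ A := CFC.sqrt_nonneg (star S * S)
    have hAsa : IsSelfAdjoint A := .of_nonneg hA0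
    have hAA : A * A = star S * S := CFC.sqrt_mul_sqrt_self _ hSS
    have hAinj : Function.Injective A := by
      refine aux_injective_of _ fun x hx => ?_
      have h2 : (star S * S) x = 0 := by
        rw [← hAA]; simp [ContinuousLinearMap.mul_apply, hx]
      have h3 : S x = 0 := aux_TstarT S x h2
      exact hS (show S x = S 0 by simp [h3])
    have hstarS : star S = A * W := by
      calc star S = star (V * A) := by rw [← hSVA]
        _ = star A * star V := star_mul _ _
        _ = A * W := by rw [hAsa.star_eq]
    have hWinj : Function.Injective W := by
      refine aux_injective_of _ fun x hx => ?_
      have h2 : (star S) x = 0 := by rw [hstarS]; simp [ContinuousLinearMap.mul_apply, hx]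
      exact hS' (show (star S) x = (star S) 0 by simp [h2])
    have hVinj : Function.Injective V :=
      LinearMap.ker_eq_bot.mp (hVker.trans (LinearMap.ker_eq_bot.mpr hS))
    -- V is unitary
    have hWV : W * V = 1 := by
      refine aux_idem _ ?_ ?_
      · calc W * V * (W * V) = W * (V * W * V) := by noncomm_ring
          _ = W * V := by rw [hV1]
      · refine aux_injective_of _ fun x hx => ?_
        have h0 : ⟪V x, V x⟫_ℂ = 0 := by
          calc ⟪V x, V x⟫_ℂ = ⟪ContinuousLinearMap.adjoint V (V x), x⟫_ℂ :=
                (ContinuousLinearMap.adjoint_inner_left _ _ _).symm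
            _ = ⟪(W * V) x, x⟫_ℂ := by
                simp [hWdef, ContinuousLinearMap.mul_apply,
                  ContinuousLinearMap.star_eq_adjoint]
            _ = 0 := by rw [hx, inner_zero_left]
        have hVx : V x = 0 := inner_self_eq_zero.mp h0
        exact hVinj (show V x = V 0 by simp [hVx])
    have hVW : V * W = 1 := by
      refine aux_idem _ ?_ ?_
      · calc V * W * (V * W) = (V * W * V) * W := by noncomm_ring
          _ = V * W := by rw [hV1]
      · refine aux_injective_of _ fun x hx => ?_
        have hadj : ContinuousLinearMap.adjoint W = V := by
          rw [← ContinuousLinearMap.star_eq_adjoint, hWdef, star_star]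
        have h0 : ⟪W x, W x⟫_ℂ = 0 := by
          calc ⟪W x, W x⟫_ℂ = ⟪ContinuousLinearMap.adjoint W (W x), x⟫_ℂ :=
                (ContinuousLinearMap.adjoint_inner_left _ _ _).symm
            _ = ⟪(V * W) x, x⟫_ℂ := by rw [hadj]; simp [ContinuousLinearMap.mul_apply]
            _ = 0 := by rw [hx, inner_zero_left]
        have hWx : W x = 0 := inner_self_eq_zero.mp h0
        exact hWinj (show W x = W 0 by simp [hWx])
    -- powers of A
    set P := CFC.rpow A l with hPdef
    set X := CFC.rpow A (1 - l) with hXdef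
    have hr1 : CFC.rpow A 1 = A := CFC.rpow_one A hA0
    have hPX : P * X = A := by
      have h2 := aux_rpow_add A hA0 hl0 h1l
      rw [show l + (1 - l) = 1 by ring, hr1] at h2
      exact h2.symm
    have hXP : X * P = A := by
      have h2 := aux_rpow_add A hA0 h1l hl0
      rw [show (1 - l) + l = 1 by ring, hr1] at h2
      exact h2.symm
    have hPinj : Function.Injective P := by
      refine aux_injective_of _ fun x hx => ?_
      have h2 : A x = 0 := by rw [← hXP]; simp [ContinuousLinearMap.mul_apply, hx]
      exact hAinj (show A x = A 0 by simp [h2])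
    have hXinj : Function.Injective X := by
      refine aux_injective_of _ fun x hx => ?_
      have h2 : A x = 0 := by rw [← hPX]; simp [ContinuousLinearMap.mul_apply, hx]
      exact hAinj (show A x = A 0 by simp [h2])
    -- the key relation V X = X W
    have e1 : V * X = X * W := by
      refine aux_cancel P _ _ hPinj ?_
      calc P * (V * X) = P * V * X := (mul_assoc _ _ _).symm
        _ = star S := h
        _ = A * W := hstarS
        _ = P * X * W := by rw [hPX]
        _ = P * (X * W) := mul_assoc _ _ _
    have e3 : X * V = W * X := by
      have h2 : W * (V * X) = W * (X * W) := by rw [e1]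
      calc X * V = W * V * X * V := by rw [hWV, one_mul]
        _ = W * (V * X) * V := by noncomm_ring
        _ = W * (X * W) * V := by rw [h2]
        _ = (W * X) * (W * V) := by noncomm_ring
        _ = W * X := by rw [hWV, mul_one]
    have e5 : V * (X * X) = (X * X) * V := by
      calc V * (X * X) = (V * X) * X := by noncomm_ring
        _ = (X * W) * X := by rw [e1]
        _ = X * (W * X) := by noncomm_ring
        _ = X * (X * V) := by rw [← e3]
        _ = (X * X) * V := by noncomm_ring
    -- V commutes with X
    have hXX : X * X = CFC.rpow A ((1 - l) + (1 - l)) := (aux_rpow_add A hA0 h1l h1l).symm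
    have hXX0 : (0 : H →L[ℂ] H) ≤ X * X := by rw [hXX]; exact CFC.rpow_nonneg
    have hXsqrt : CFC.rpow (X * X) 2⁻¹ = X := by
      rw [hXX]
      have h2 := CFC.rpow_rpow_of_exponent_nonneg A ((1 - l) + (1 - l)) 2⁻¹
        (by linarith) (by norm_num) hA0
      rw [show ((1 - l) + (1 - l)) * 2⁻¹ = 1 - l by ring] at h2
      exact h2
    have hVX : V * X = X * V := by
      have h2 := aux_commute_rpow (X * X) V hXX0 e5 2⁻¹
      rwa [hXsqrt] at h2
    -- conclude V = W and V commutes with A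
    have hVeqW : V = W := aux_cancel X V W hXinj (by rw [← hVX, e1])
    have hAX : CFC.rpow X (1 - l)⁻¹ = A := by
      have h2 := CFC.rpow_rpow_of_exponent_nonneg A (1 - l) (1 - l)⁻¹
        (by linarith) (by positivity) hA0
      rw [show (1 - l) * (1 - l)⁻¹ = 1 by field_simp] at h2
      rw [CFC.rpow_one A hA0] at h2
      exact h2
    have hX0 : (0 : H →L[ℂ] H) ≤ X := CFC.rpow_nonneg
    have hVA : V * A = A * V := by
      have h2 := aux_commute_rpow X V hX0 hVX (1 - l)⁻¹
      rwa [hAX] at h2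
    calc S = V * A := hSVA
      _ = A * V := hVA
      _ = A * W := by rw [hVeqW]
      _ = star S := hstarS.symm
  · -- degenerate case: no partial isometry exists, so `polarIsom S = 0`
    have hp : polarIsom S = 0 := by unfold polarIsom; rw [dif_neg hex]
    unfold aluthge at h
    rw [hp, mul_zero, zero_mul] at h
    have h0 : star S = 0 := h.symm
    rw [h0, ← star_star S, h0, star_zero]
end

section
/- Let H be a complex Hilbert space, λ ∈ (0,1], and T ∈ B(H). Then Δ_λ(T) = 0 if and only if T² = 0. -/
open scoped NNReal InnerProductSpace ComplexConjugate

set_option synthInstance.maxHeartbeats 2000000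
set_option maxHeartbeats 2000000

noncomputable section AluthgeAuxSection

namespace AluthgeAux

variable {H : Type*} [NormedAddCommGroup H] [InnerProductSpace ℂ H] [CompleteSpace H]

lemma inner_self_of_sq {A B : H →L[ℂ] H} (hB : IsSelfAdjoint B) (hBB : B * B = A) (x : H) :
    ⟪B x, B x⟫_ℂ = ⟪A x, x⟫_ℂ := by
  have h1 : ContinuousLinearMap.adjoint B = B := hB
  calc ⟪B x, B x⟫_ℂ = ⟪ContinuousLinearMap.adjoint B (B x), x⟫_ℂ := by
        rw [ContinuousLinearMap.adjoint_inner_left]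
    _ = ⟪A x, x⟫_ℂ := by rw [h1, ← hBB]; rfl

variable (T : H →L[ℂ] H)

lemma opAbs_nonneg : (0 : H →L[ℂ] H) ≤ opAbs T := CFC.sqrt_nonneg _

lemma opAbs_selfAdjoint : IsSelfAdjoint (opAbs T) := .of_nonneg (opAbs_nonneg T)

lemma opAbs_mul_self : opAbs T * opAbs T = star T * T :=
  CFC.sqrt_mul_sqrt_self _ (star_mul_self_nonneg T)

lemma inner_opAbs (x : H) : ⟪opAbs T x, opAbs T x⟫_ℂ = ⟪T x, T x⟫_ℂ := by
  rw [inner_self_of_sq (opAbs_selfAdjoint T) (opAbs_mul_self T) x]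
  show ⟪(star T) (T x), x⟫_ℂ = _
  rw [ContinuousLinearMap.star_eq_adjoint, ContinuousLinearMap.adjoint_inner_left]

lemma norm_opAbs (x : H) : ‖opAbs T x‖ = ‖T x‖ := by
  have := inner_opAbs T x
  rw [inner_self_eq_norm_sq_to_K, inner_self_eq_norm_sq_to_K] at this
  have h2 : ‖opAbs T x‖ ^ 2 = ‖T x‖ ^ 2 := by exact_mod_cast this
  nlinarith [norm_nonneg (opAbs T x), norm_nonneg (T x)]

lemma opAbs_eq_zero_iff (x : H) : opAbs T x = 0 ↔ T x = 0 := by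
  rw [← norm_eq_zero (a := opAbs T x), norm_opAbs, norm_eq_zero]

lemma rpow_mul_rpow (A : H →L[ℂ] H) (hA : (0:H →L[ℂ] H) ≤ A) {a b : ℝ}
    (hab : 0 < a ∨ 0 < b) (ha : 0 ≤ a) (hb : 0 ≤ b) :
    CFC.rpow A a * CFC.rpow A b = CFC.rpow A (a + b) := by
  show cfc (fun x : ℝ≥0 => x ^ a) A * cfc (fun x : ℝ≥0 => x ^ b) A
      = cfc (fun x : ℝ≥0 => x ^ (a + b)) A
  rw [← cfc_mul _ _ A]
  apply cfc_congr
  intro x _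
  show x ^ a * x ^ b = x ^ (a + b)
  rcases eq_or_ne x 0 with rfl | hx
  · rcases hab with h | h
    · simp [NNReal.zero_rpow h.ne', NNReal.zero_rpow (by positivity : (0:ℝ) < a + b).ne']
    · simp [NNReal.zero_rpow h.ne', NNReal.zero_rpow (by positivity : (0:ℝ) < a + b).ne']
  · rw [← NNReal.rpow_add hx]

lemma ker_rpow_halve (A : H →L[ℂ] H) (hA : (0:H →L[ℂ] H) ≤ A) {s : ℝ} (hs : 0 < s) {x : H}
    (hx : CFC.rpow A (2 * s) x = 0) : CFC.rpow A s x = 0 := by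
  have hBB : CFC.rpow A s * CFC.rpow A s = CFC.rpow A (2 * s) := by
    rw [rpow_mul_rpow A hA (Or.inl hs) hs.le hs.le]; ring_nf
  have h1 : ⟪CFC.rpow A s x, CFC.rpow A s x⟫_ℂ = ⟪CFC.rpow A (2*s) x, x⟫_ℂ :=
    inner_self_of_sq (IsSelfAdjoint.of_nonneg CFC.rpow_nonneg) hBB x
  rw [hx, inner_zero_left] at h1
  exact inner_self_eq_zero.mp h1

lemma ker_rpow (A : H →L[ℂ] H) (hA : (0:H →L[ℂ] H) ≤ A) {l : ℝ} (hl : 0 < l) {x : H}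
    (hx : A x = 0) : CFC.rpow A l x = 0 := by
  obtain ⟨k, hk⟩ : ∃ k : ℕ, 1 ≤ l * 2 ^ k := by
    obtain ⟨k, hk⟩ := pow_unbounded_of_one_lt (1/l) (by norm_num : (1:ℝ) < 2)
    refine ⟨k, ?_⟩
    rw [div_lt_iff₀ hl] at hk
    nlinarith
  have base : CFC.rpow A (l * 2 ^ k) x = 0 := by
    have : CFC.rpow A (l * 2 ^ k - 1) * CFC.rpow A 1 = CFC.rpow A (l * 2 ^ k) := by
      rw [rpow_mul_rpow A hA (Or.inr one_pos) (by linarith) zero_le_one]; ring_nf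
    rw [← this]
    show CFC.rpow A (l * 2 ^ k - 1) (CFC.rpow A 1 x) = 0
    have h1 : CFC.rpow A 1 = A := CFC.rpow_one A hA
    rw [h1, hx, map_zero]
  clear hk
  induction k with
  | zero => simpa using base
  | succ n ih =>
    exact ih (ker_rpow_halve A hA (by positivity) (by rw [← base]; ring_nf))

-- orthogonal of range of selfadjoint nonneg operator is kernel
lemma mem_orth_range_iff (A : H →L[ℂ] H) (hA : IsSelfAdjoint A) (x : H) :
    x ∈ (LinearMap.range (A : H →ₗ[ℂ] H))ᗮ ↔ A x = 0 := by
  have hadj : ContinuousLinearMap.adjoint A = A := hA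
  have key : ∀ u v : H, ⟪A u, v⟫_ℂ = ⟪u, A v⟫_ℂ := by
    intro u v
    have := ContinuousLinearMap.adjoint_inner_left A v u
    rwa [hadj] at this
  constructor
  · intro hx
    have h0 : ⟪A (A x), x⟫_ℂ = 0 := hx (A (A x)) ⟨A x, rfl⟩
    have h1 : ⟪A x, A x⟫_ℂ = 0 := by
      rw [key x (A x), ← inner_conj_symm, h0, map_zero]
    exact inner_self_eq_zero.mp h1
  · intro hx u hu
    obtain ⟨y, rfl⟩ := hu
    show ⟪A y, x⟫_ℂ = 0
    rw [key y x, hx, inner_zero_right]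

lemma exists_polar (T : H →L[ℂ] H) : ∃ V, IsPolarPartialIsom T V := by
  set A : H →L[ℂ] H := opAbs T with hAdef
  have hkerAT : ∀ x, A x = 0 ↔ T x = 0 := opAbs_eq_zero_iff T
  set N : Submodule ℂ H := LinearMap.range (A : H →ₗ[ℂ] H) with hN
  set M : Submodule ℂ H := N.topologicalClosure with hM
  haveI : CompleteSpace M := N.isClosed_topologicalClosure.completeSpace_coe
  -- the isometry g : N → H, A x ↦ T x
  have hker_le : LinearMap.ker (A : H →ₗ[ℂ] H) ≤ LinearMap.ker (T : H →ₗ[ℂ] H) := by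
    intro x hx
    exact (hkerAT x).mp hx
  let g : N →ₗ[ℂ] H :=
    ((LinearMap.ker (A : H →ₗ[ℂ] H)).liftQ (T : H →ₗ[ℂ] H) hker_le).comp
      ((A : H →ₗ[ℂ] H).quotKerEquivRange.symm.toLinearMap)
  have hg : ∀ x : H, ∀ h, g ⟨A x, h⟩ = T x := by
    intro x h
    have h1 : (A : H →ₗ[ℂ] H).quotKerEquivRange (Submodule.Quotient.mk x) = ⟨A x, h⟩ :=
      Subtype.ext (LinearMap.quotKerEquivRange_apply_mk _ x)
    have h2 : (A : H →ₗ[ℂ] H).quotKerEquivRange.symm ⟨A x, h⟩ = Submodule.Quotient.mk x :=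
      (LinearEquiv.symm_apply_eq _).mpr h1.symm
    show ((LinearMap.ker (A : H →ₗ[ℂ] H)).liftQ (T : H →ₗ[ℂ] H) hker_le)
        ((A : H →ₗ[ℂ] H).quotKerEquivRange.symm ⟨A x, h⟩) = T x
    rw [h2, Submodule.liftQ_apply]
    rfl
  have hgnorm : ∀ y : N, ‖g y‖ = ‖(y : H)‖ := by
    rintro ⟨y, hy⟩
    obtain ⟨x, rfl⟩ := hy
    exact (congrArg norm (hg x ⟨x, rfl⟩)).trans (norm_opAbs T x).symm
  let gIso : N →ₗᵢ[ℂ] H := ⟨g, hgnorm⟩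
  -- the inclusion N → M
  let eIso : N →ₗᵢ[ℂ] M := ⟨Submodule.inclusion N.le_topologicalClosure, fun x => rfl⟩
  let e : N →L[ℂ] M := eIso.toContinuousLinearMap
  have h_e : IsUniformInducing e := eIso.isometry.isUniformInducing
  have h_dense : DenseRange e := by
    refine Topology.IsInducing.subtypeVal.dense_iff.2 fun m => ?_
    convert show (m : H) ∈ closure (N : Set H) from m.prop
    rw [← Set.range_comp]
    exact Set.ext fun y => ⟨by rintro ⟨y, rfl⟩; exact y.prop, fun hy => ⟨⟨y, hy⟩, rfl⟩⟩
  let ghat : M →L[ℂ] H := gIso.toContinuousLinearMap.extend e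
  have hghat_e : ∀ y : N, ghat (e y) = g y := fun y =>
    ContinuousLinearMap.extend_eq _ h_dense h_e y
  have hghat_norm : ∀ m : M, ‖ghat m‖ = ‖(m : H)‖ := by
    intro m
    refine h_dense.induction_on m ?_ ?_
    · exact isClosed_eq (by continuity) (by continuity)
    · intro y
      rw [hghat_e y, hgnorm y]
      rfl
  let ghatIso : M →ₗᵢ[ℂ] H := ⟨ghat.toLinearMap, hghat_norm⟩
  have hinner : ∀ m m' : M, ⟪ghat m, ghat m'⟫_ℂ = ⟪(m : H), (m' : H)⟫_ℂ := fun m m' =>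
    ghatIso.inner_map_map m m'
  set P := M.orthogonalProjectionOnto with hP
  set V : H →L[ℂ] H := ghat.comp (P : H →L[ℂ] M) with hV
  have hm : ∀ x : H, A x ∈ M := fun x => N.le_topologicalClosure ⟨x, rfl⟩
  have hVapply : ∀ x : H, V x = ghat (P x) := fun x => rfl
  have hVA : ∀ x : H, V (A x) = T x := by
    intro x
    have h1 : P (A x) = ⟨A x, hm x⟩ :=
      Submodule.orthogonalProjectionOnto_mem_subspace_eq_self (⟨A x, hm x⟩ : M)
    rw [hVapply, h1]
    have h2 : (⟨A x, hm x⟩ : M) = e ⟨A x, ⟨x, rfl⟩⟩ := rfl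
    rw [h2, hghat_e]
    exact hg x ⟨x, rfl⟩
  have hMorth : Mᗮ = Nᗮ := by
    rw [hM, ← Submodule.orthogonal_orthogonal_eq_closure]
    exact le_antisymm (Submodule.orthogonal_le N.le_orthogonal_orthogonal)
      Nᗮ.le_orthogonal_orthogonal
  have hkerV : ∀ x : H, V x = 0 ↔ T x = 0 := by
    intro x
    rw [hVapply]
    constructor
    · intro hx
      have h1 : (P x : H) = 0 := by
        rw [← norm_eq_zero, ← hghat_norm, hx, norm_zero]
      have h2 : P x = 0 := Subtype.ext h1
      have h3 : x ∈ Mᗮ := Submodule.orthogonalProjectionOnto_eq_zero_iff.mp h2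
      rw [hMorth] at h3
      exact (hkerAT x).mp ((mem_orth_range_iff A (opAbs_selfAdjoint T) x).mp h3)
    · intro hx
      have h3 : x ∈ Nᗮ :=
        (mem_orth_range_iff A (opAbs_selfAdjoint T) x).mpr ((hkerAT x).mpr hx)
      rw [← hMorth] at h3
      rw [Submodule.orthogonalProjectionOnto_eq_zero_iff.mpr h3, map_zero]
  have hsVV : star V * V = M.subtypeL.comp (P : H →L[ℂ] M) := by
    refine ContinuousLinearMap.ext fun x => ext_inner_right ℂ fun y => ?_
    have h1 : ⟪(star V * V) x, y⟫_ℂ = ⟪V x, V y⟫_ℂ := by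
      show ⟪(ContinuousLinearMap.adjoint V) (V x), y⟫_ℂ = _
      rw [ContinuousLinearMap.adjoint_inner_left]
    have h2 : ⟪V x, V y⟫_ℂ = ⟪(P x : H), (P y : H)⟫_ℂ := by
      rw [hVapply, hVapply]; exact hinner (P x) (P y)
    have h3 : ⟪(P x : H), (P y : H)⟫_ℂ = ⟪(P x : H), y⟫_ℂ := by
      have h4 : y - (P y : H) ∈ Mᗮ := Submodule.sub_starProjection_mem_orthogonal (K := M) y
      have h5 : ⟪(P x : H), y - (P y : H)⟫_ℂ = 0 :=
        (Submodule.mem_orthogonal M (y - (P y : H))).mp h4 (P x : H) (P x).2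
      rw [inner_sub_right] at h5
      linear_combination -h5
    rw [h1, h2, h3]
    rfl
  refine ⟨V, ?_, ?_, ?_⟩
  · refine ContinuousLinearMap.ext fun x => ?_
    calc (V * star V * V) x = V ((star V * V) x) := rfl
      _ = V (M.subtypeL (P x)) := by rw [hsVV]; rfl
      _ = ghat (P ((P x : H))) := rfl
      _ = ghat (P x) := by rw [Submodule.orthogonalProjectionOnto_mem_subspace_eq_self]
      _ = V x := rfl
  · ext x
    simpa using hkerV x
  · exact ContinuousLinearMap.ext fun x => (hVA x).symm

lemma orth_closure (N : Submodule ℂ H) : N.topologicalClosureᗮ = Nᗮ := by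
  rw [← Submodule.orthogonal_orthogonal_eq_closure]
  exact le_antisymm (Submodule.orthogonal_le N.le_orthogonal_orthogonal)
    Nᗮ.le_orthogonal_orthogonal


theorem aluthge_eq_zero_iff_sq_eq_zero' (l : ℝ) (hl : l ∈ Set.Ioc (0 : ℝ) 1)
    (T : H →L[ℂ] H) :
    aluthge l T = 0 ↔ T * T = 0 := by
  obtain ⟨hl0, hl1⟩ := hl
  have hA : (0 : H →L[ℂ] H) ≤ opAbs T := opAbs_nonneg T
  set A : H →L[ℂ] H := opAbs T with hAdef
  have hAsa : star A = A := opAbs_selfAdjoint T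
  have hex := exists_polar T
  have hVspec : IsPolarPartialIsom T (polarIsom T) := by
    rw [polarIsom, dif_pos hex]; exact hex.choose_spec
  set V : H →L[ℂ] H := polarIsom T with hVdef
  obtain ⟨hVVV, hkerV, hTVA⟩ := hVspec
  have halu : aluthge l T = CFC.rpow A l * V * CFC.rpow A (1 - l) := rfl
  have hVP : V * (star V * V) = V := by rw [← mul_assoc]; exact hVVV
  -- star V * V * A = A
  have hPA : star V * V * A = A := by
    have h1 : A * (1 - star V * V) = 0 := by
      ext x
      have h2 : V ((1 - star V * V) x) = 0 := by
        have h3 : (V * (1 - star V * V)) x = 0 := by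
          rw [mul_sub, mul_one, hVP, sub_self]; rfl
        exact h3
      have h4 : (1 - star V * V) x ∈ LinearMap.ker (T : H →ₗ[ℂ] H) := by
        rw [← hkerV]; exact h2
      show A ((1 - star V * V) x) = (0 : H →L[ℂ] H) x
      rw [(opAbs_eq_zero_iff T _).mpr h4]; rfl
    have h5 := congrArg star h1
    rw [star_mul, star_zero, star_sub, star_one, star_mul, star_star, hAsa] at h5
    have h6 : (1 - star V * V) * A = 0 := h5
    rw [sub_mul, one_mul, sub_eq_zero] at h6
    exact h6.symm
  have hcomb : CFC.rpow A (1 - l) * CFC.rpow A l = A := by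
    rw [rpow_mul_rpow A hA (Or.inr hl0) (by linarith) hl0.le]
    have h7 : 1 - l + l = 1 := by ring
    rw [h7]
    exact CFC.rpow_one A hA
  constructor
  · intro h
    have hAVA : A * V * A = 0 := by
      calc A * V * A
          = (CFC.rpow A (1-l) * CFC.rpow A l) * V * (CFC.rpow A (1-l) * CFC.rpow A l) := by
            rw [hcomb]
        _ = CFC.rpow A (1-l) * (CFC.rpow A l * V * CFC.rpow A (1-l)) * CFC.rpow A l := by
            simp only [mul_assoc]
        _ = 0 := by rw [← halu, h, mul_zero, zero_mul]
    have hAT : A * T = 0 := by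
      rw [hTVA, ← hAdef, ← mul_assoc]; exact hAVA
    calc T * T = V * (A * T) := by rw [hTVA, ← hAdef, mul_assoc]
      _ = 0 := by rw [hAT, mul_zero]
  · intro h
    have hAT : A * T = 0 := by
      calc A * T = star V * V * A * T := by rw [hPA]
        _ = star V * (V * A * T) := by simp only [mul_assoc]
        _ = star V * (T * T) := by rw [hTVA, ← hAdef]
        _ = 0 := by rw [h, mul_zero]
    set N : Submodule ℂ H := LinearMap.range (A : H →ₗ[ℂ] H) with hN
    set M : Submodule ℂ H := N.topologicalClosure with hM
    haveI : CompleteSpace M := N.isClosed_topologicalClosure.completeSpace_coe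
    set P := M.orthogonalProjectionOnto with hP
    have hArV : ∀ x : H, CFC.rpow A l (V x) = 0 := by
      intro x
      have hxdec : x = (P x : H) + (x - (P x : H)) := by abel
      have hC1 : ∀ v ∈ M, CFC.rpow A l (V v) = 0 := by
        have hSclosed : IsClosed {v : H | CFC.rpow A l (V v) = 0} := by
          have : {v : H | CFC.rpow A l (V v) = 0}
              = ((CFC.rpow A l).comp V) ⁻¹' {0} := rfl
          rw [this]
          exact isClosed_singleton.preimage ((CFC.rpow A l).comp V).continuous
        intro v hv
        have hsub : (N : Set H) ⊆ {v : H | CFC.rpow A l (V v) = 0} := by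
          rintro _ ⟨y, rfl⟩
          show CFC.rpow A l (V (A y)) = 0
          have hVAy : V (A y) = T y := by
            have : (V * A) y = T y := by rw [← hTVA]
            exact this
          rw [hVAy]
          exact ker_rpow A hA hl0 (show A (T y) = 0 from by
            have : (A * T) y = 0 := by rw [hAT]; rfl
            exact this)
        have hvM : v ∈ closure (N : Set H) := hv
        exact closure_minimal hsub hSclosed hvM
      have hC2 : V (x - (P x : H)) = 0 := by
        have h8 : x - (P x : H) ∈ (N.topologicalClosure)ᗮ :=
          Submodule.sub_starProjection_mem_orthogonal (K := M) x
        rw [orth_closure] at h8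
        have h9 : A (x - (P x : H)) = 0 :=
          (mem_orth_range_iff A (IsSelfAdjoint.of_nonneg hA) _).mp h8
        have h10 : T (x - (P x : H)) = 0 := (opAbs_eq_zero_iff T _).mp h9
        have h11 : x - (P x : H) ∈ LinearMap.ker (V : H →ₗ[ℂ] H) := by rw [hkerV]; exact h10
        exact h11
      calc CFC.rpow A l (V x)
          = CFC.rpow A l (V ((P x : H) + (x - (P x : H)))) := by rw [← hxdec]
        _ = CFC.rpow A l (V (P x : H)) + CFC.rpow A l (V (x - (P x : H))) := by
            rw [map_add, map_add]
        _ = 0 := by rw [hC1 _ (P x).2, hC2, map_zero, add_zero]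
    rw [halu]
    ext x
    show CFC.rpow A l (V (CFC.rpow A (1-l) x)) = 0
    exact hArV _

end AluthgeAux

end AluthgeAuxSection

variable {H K : Type*} [NormedAddCommGroup H] [InnerProductSpace ℂ H] [CompleteSpace H]
  [NormedAddCommGroup K] [InnerProductSpace ℂ K] [CompleteSpace K]

theorem aluthge_eq_zero_iff_sq_eq_zero (l : ℝ) (hl : l ∈ Set.Ioc (0 : ℝ) 1)
    (T : H →L[ℂ] H) :
    aluthge l T = 0 ↔ T * T = 0 :=
  AluthgeAux.aluthge_eq_zero_iff_sq_eq_zero' l hl T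
end
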